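/- Let f be a nonzero complex polynomial with a zero r of multiplicity m, and suppose n < m. Then φ(w) = 0 for every w ∈ CZ_n with ⟨w⟩_0 = r, where φ is the zeon extension of f. -/

import Mathlib

noncomputable section

/-- The ideal of squares of generators defining the zeon algebra. -/
def zeonIdeal (n : ℕ) : Ideal (MvPolynomial (Fin n) ℂ) :=
  Ideal.span (Set.range fun i : Fin n => (MvPolynomial.X i : MvPolynomial (Fin n) ℂ) ^ 2)

/-- The `n`-particle complex zeon algebra `CZ_n`. -/
abbrev Zeon (n : ℕ) := MvPolynomial (Fin n) ℂ ⧸ zeonIdeal n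

/-- The scalar part `⟨u⟩₀` of a zeon, as a `ℂ`-algebra homomorphism. -/
def scalarPart (n : ℕ) : Zeon n →ₐ[ℂ] ℂ :=
  Ideal.Quotient.liftₐ (zeonIdeal n) (MvPolynomial.aeval fun _ => (0 : ℂ)) (by
    intro a ha
    have h : zeonIdeal n ≤ RingHom.ker
        (MvPolynomial.aeval (R := ℂ) fun _ : Fin n => (0 : ℂ)).toRingHom := by
      rw [zeonIdeal, Ideal.span_le]
      rintro _ ⟨i, rfl⟩
      simp [RingHom.mem_ker]
    exact h ha)

/-- The dual (nilpotent) part `Du = u - ⟨u⟩₀`. -/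
def dualPart (n : ℕ) (u : Zeon n) : Zeon n := u - algebraMap ℂ (Zeon n) (scalarPart n u)

/-- The generator `ζ_i`. -/
def zeta (n : ℕ) (i : Fin n) : Zeon n := Ideal.Quotient.mk _ (MvPolynomial.X i)

/-- The basis blade `ζ_I`. -/
def blade (n : ℕ) (I : Finset (Fin n)) : Zeon n :=
  Ideal.Quotient.mk _ (∏ i ∈ I, MvPolynomial.X i)

/-!
If `⟨w⟩₀ = r`, then `w - r` lies in the ideal spanned by the generators `ζ_i`, each of square
zero. A sum of `k` commuting square-zero elements vanishes in degree `k + 1`, so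
`(w - r) ^ (n + 1) = 0`, and hence `(w - r) ^ m = 0`. Since `(X - r) ^ m` divides `f`, this
forces `f(w) = 0`.
-/

theorem Finset.sum_pow_card_add_one_eq_zero_of_sq_eq_zero {ι R : Type*} [CommSemiring R]
    {x : ι → R} (hx : ∀ i, x i ^ 2 = 0) (s : Finset ι) : (∑ i ∈ s, x i) ^ (s.card + 1) = 0 := by
  classical
  induction s using Finset.induction_on with
  | empty => simp
  | insert i s hi ih =>
    rw [Finset.sum_insert hi, Finset.card_insert_of_notMem hi]
    exact (Commute.all _ _).add_pow_eq_zero_of_add_le_succ_of_pow_eq_zero (hx i) ih (by omega)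

theorem Ideal.pow_card_add_one_eq_zero_of_mem_span_range {ι R : Type*} [Fintype ι]
    [CommSemiring R] {v : ι → R} (hv : ∀ i, v i ^ 2 = 0) {x : R}
    (hx : x ∈ Ideal.span (Set.range v)) : x ^ (Fintype.card ι + 1) = 0 := by
  obtain ⟨c, rfl⟩ := Ideal.mem_span_range_iff_exists_fun.mp hx
  exact Finset.sum_pow_card_add_one_eq_zero_of_sq_eq_zero
    (fun i => by rw [mul_pow, hv, mul_zero]) _

theorem MvPolynomial.mem_idealOfVars_iff {σ R : Type*} [CommSemiring R] {p : MvPolynomial σ R} :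
    p ∈ idealOfVars σ R ↔ constantCoeff p = 0 := by
  simpa [Finsupp.degree_eq_zero_iff, MvPolynomial.constantCoeff_eq] using
    mem_pow_idealOfVars_iff' 1 p

theorem zeta_sq (n : ℕ) (i : Fin n) : zeta n i ^ 2 = 0 :=
  Ideal.Quotient.eq_zero_iff_mem.mpr (Ideal.subset_span ⟨i, rfl⟩)

theorem mem_span_range_zeta_of_scalarPart_eq_zero {n : ℕ} {u : Zeon n}
    (hu : scalarPart n u = 0) : u ∈ Ideal.span (Set.range (zeta n)) := by
  obtain ⟨p, rfl⟩ := Ideal.Quotient.mk_surjective u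
  have hp : p ∈ MvPolynomial.idealOfVars (Fin n) ℂ := by
    rw [MvPolynomial.mem_idealOfVars_iff, ← MvPolynomial.eval_zero]
    exact hu
  have := Ideal.mem_map_of_mem (Ideal.Quotient.mk (zeonIdeal n)) hp
  rwa [Ideal.map_span, ← Set.range_comp] at this

theorem pow_succ_eq_zero_of_scalarPart_eq_zero {n : ℕ} {u : Zeon n} (hu : scalarPart n u = 0) :
    u ^ (n + 1) = 0 := by
  simpa using Ideal.pow_card_add_one_eq_zero_of_mem_span_range (zeta_sq n)
    (mem_span_range_zeta_of_scalarPart_eq_zero hu)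

theorem stmt14_general (n : ℕ) (f : Polynomial ℂ) (r : ℂ) (m : ℕ)
    (hr : f.rootMultiplicity r = m) (hnm : n < m) :
    ∀ w : Zeon n, scalarPart n w = r → Polynomial.aeval w f = 0 := by
  intro w hw
  have hd : (w - algebraMap ℂ (Zeon n) r) ^ m = 0 :=
    pow_eq_zero_of_le hnm (pow_succ_eq_zero_of_scalarPart_eq_zero (by simp [hw]))
  refine Polynomial.aeval_eq_zero_of_dvd_aeval_eq_zero (hr ▸ f.pow_rootMultiplicity_dvd r) ?_
  simpa using hd

/-- a zero of multiplicity `m > n` absorbs every zeon with that scalar part. -/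
theorem stmt14 (n : ℕ) (f : Polynomial ℂ) (hf : f ≠ 0) (r : ℂ) (m : ℕ)
    (hr : f.rootMultiplicity r = m) (hnm : n < m) :
    ∀ w : Zeon n, scalarPart n w = r → Polynomial.aeval w f = 0 :=
  stmt14_general n f r m hr hnm
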